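/- Let L and n be positive integers with n < L, let Ω ⊆ Z_L with |Ω| = n, and let C and D be complex sequences of length L whose unitary DFTs satisfy |ĉ_f|² = |d̂_f|² = L/(L−n) for f ∉ Ω and ĉ_f = d̂_f = 0 for f ∈ Ω. Then the maximum cross-correlation magnitude satisfies max_{0≤τ<L} |θ_{C,D}(τ)| ≥ L/√(L−n). -/

import Mathlib

/-- Periodic cross-correlation of two length-`L` complex sequences. -/
noncomputable def pcc (L : ℕ) (c d : ℕ → ℂ) (τ : ℕ) : ℂ :=
  ∑ t ∈ Finset.range L, c t * (starRingEnd ℂ) (d ((t + τ) % L))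

/-- Unitary DFT of a length-`L` complex sequence. -/
noncomputable def udft (L : ℕ) (c : ℕ → ℂ) (f : ℕ) : ℂ :=
  ((Real.sqrt L : ℝ) : ℂ)⁻¹ * ∑ t ∈ Finset.range L,
    c t * Complex.exp (-(2 * (Real.pi : ℂ) * Complex.I * (t : ℂ) * (f : ℂ)) / (L : ℂ))

noncomputable def w (L : ℕ) : ℂ := Complex.exp (2 * Real.pi * Complex.I / L)

lemma w_zpow (L : ℕ) (k : ℤ) : w L ^ k = Complex.exp (2 * Real.pi * Complex.I * k / L) := by
  rw [w, ← Complex.exp_int_mul]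
  congr 1
  ring

lemma w_zpow_eq_one_iff (L : ℕ) (hL : 0 < L) (k : ℤ) : w L ^ k = 1 ↔ (L:ℤ) ∣ k := by
  have hL' : (L:ℂ) ≠ 0 := by exact_mod_cast hL.ne'
  have hπ : (Real.pi : ℂ) ≠ 0 := by exact_mod_cast Real.pi_ne_zero
  have h2 : (2:ℂ) * Real.pi * Complex.I ≠ 0 := by simp [Complex.I_ne_zero, hπ]
  rw [w_zpow, Complex.exp_eq_one_iff]
  constructor
  · rintro ⟨m, hm⟩
    refine ⟨m, ?_⟩
    have hm' : (k:ℂ) = (L:ℂ) * m := by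
      apply mul_left_cancel₀ h2
      field_simp at hm
      linear_combination (2 * (Real.pi:ℂ) * Complex.I) * hm
    exact_mod_cast hm'
  · rintro ⟨m, rfl⟩
    exact ⟨m, by field_simp; simp⟩

lemma sum_w (L : ℕ) (hL : 0 < L) (k : ℤ) :
    ∑ f ∈ Finset.range L, w L ^ (k * f) = if (L:ℤ) ∣ k then (L:ℂ) else 0 := by
  have hterm : ∀ f : ℕ, w L ^ (k * f) = (w L ^ k) ^ f := by
    intro f
    rw [zpow_mul, zpow_natCast]
  split_ifs with h
  · rw [Finset.sum_congr rfl fun f _ => hterm f]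
    rw [(w_zpow_eq_one_iff L hL k).mpr h]
    simp
  · rw [Finset.sum_congr rfl fun f _ => hterm f, geom_sum_eq]
    · have : (w L ^ k) ^ L = 1 := by
        rw [← zpow_natCast, ← zpow_mul, mul_comm]
        exact (w_zpow_eq_one_iff L hL _).mpr ⟨k, rfl⟩
      rw [this]; simp
    · intro h1
      exact h ((w_zpow_eq_one_iff L hL k).mp h1)

lemma conj_w_zpow (L : ℕ) (k : ℤ) :
    (starRingEnd ℂ) (w L ^ k) = w L ^ (-k) := by
  rw [w_zpow, w_zpow, ← Complex.exp_conj]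
  congr 1
  rw [show ((2:ℂ) * Real.pi * Complex.I * k / L) = ((2 * Real.pi * k / L : ℝ) : ℂ) * Complex.I by push_cast; ring,
      show ((2:ℂ) * Real.pi * Complex.I * ((-k : ℤ) : ℂ) / L) = -(((2 * Real.pi * k / L : ℝ) : ℂ) * Complex.I) by push_cast; ring]
  simp [Complex.conj_I, map_ofNat]

lemma w_ne_zero (L : ℕ) : w L ≠ 0 := Complex.exp_ne_zero _

lemma udft_eq (L : ℕ) (c : ℕ → ℂ) (f : ℕ) :
    udft L c f = ((Real.sqrt L : ℝ) : ℂ)⁻¹ * ∑ t ∈ Finset.range L,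
      c t * w L ^ (-(t * f : ℤ)) := by
  unfold udft
  congr 1
  apply Finset.sum_congr rfl
  intro t _
  congr 1
  rw [w_zpow]
  congr 1
  push_cast
  ring

lemma conj_udft (L : ℕ) (d : ℕ → ℂ) (f : ℕ) :
    (starRingEnd ℂ) (udft L d f) = ((Real.sqrt L : ℝ) : ℂ)⁻¹ * ∑ s ∈ Finset.range L,
      (starRingEnd ℂ) (d s) * w L ^ ((s * f : ℤ)) := by
  rw [udft_eq, map_mul, map_sum]
  congr 1
  · simp [Complex.conj_ofReal]
  · apply Finset.sum_congr rfl
    intro s _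
    rw [map_mul, conj_w_zpow, neg_neg]

lemma dvd_iff_eq_mod (L : ℕ) (hL : 0 < L) (s k : ℕ) (hs : s < L) :
    (L:ℤ) ∣ ((s:ℤ) - (k:ℤ)) ↔ s = k % L := by
  have h1 : ((s:ℤ)) % L = s := Int.emod_eq_of_lt (by positivity) (by exact_mod_cast hs)
  rw [Int.dvd_iff_emod_eq_zero, ← Int.emod_eq_emod_iff_emod_sub_eq_zero, h1,
    ← Int.natCast_mod]
  exact Nat.cast_inj

lemma pcc_eq_sum (L : ℕ) (hL : 0 < L) (c d : ℕ → ℂ) (τ : ℕ) :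
    pcc L c d τ = ∑ f ∈ Finset.range L,
      udft L c f * (starRingEnd ℂ) (udft L d f) * w L ^ (-(f * τ : ℤ)) := by
  have hL' : (L:ℂ) ≠ 0 := by exact_mod_cast hL.ne'
  have hsq : ((Real.sqrt L : ℝ) : ℂ)⁻¹ * ((Real.sqrt L : ℝ) : ℂ)⁻¹ = (L:ℂ)⁻¹ := by
    rw [← mul_inv, ← Complex.ofReal_mul, Real.mul_self_sqrt (by positivity)]
    simp
  symm
  calc ∑ f ∈ Finset.range L,
      udft L c f * (starRingEnd ℂ) (udft L d f) * w L ^ (-(f * τ : ℤ))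
      = ∑ f ∈ Finset.range L, (L:ℂ)⁻¹ * ∑ t ∈ Finset.range L, ∑ s ∈ Finset.range L,
          c t * (starRingEnd ℂ) (d s) * w L ^ (((s:ℤ) - t - τ) * f) := by
        apply Finset.sum_congr rfl
        intro f _
        rw [udft_eq, conj_udft]
        rw [show ((Real.sqrt L : ℝ) : ℂ)⁻¹ * (∑ t ∈ Finset.range L, c t * w L ^ (-(t * f : ℤ))) *
            (((Real.sqrt L : ℝ) : ℂ)⁻¹ * ∑ s ∈ Finset.range L, (starRingEnd ℂ) (d s) * w L ^ ((s * f : ℤ))) *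
            w L ^ (-(f * τ : ℤ))
          = (((Real.sqrt L : ℝ) : ℂ)⁻¹ * ((Real.sqrt L : ℝ) : ℂ)⁻¹) *
            (((∑ t ∈ Finset.range L, c t * w L ^ (-(t * f : ℤ))) *
              ∑ s ∈ Finset.range L, (starRingEnd ℂ) (d s) * w L ^ ((s * f : ℤ))) *
              w L ^ (-(f * τ : ℤ))) from by ring, hsq]
        congr 1
        rw [Finset.sum_mul_sum, Finset.sum_mul]
        apply Finset.sum_congr rfl
        intro t _
        rw [Finset.sum_mul]
        apply Finset.sum_congr rfl
        intro s _
        rw [show c t * w L ^ (-(t * f : ℤ)) * ((starRingEnd ℂ) (d s) * w L ^ ((s * f : ℤ))) *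
            w L ^ (-(f * τ : ℤ))
          = c t * (starRingEnd ℂ) (d s) *
            (w L ^ (-(t * f : ℤ)) * w L ^ ((s * f : ℤ)) * w L ^ (-(f * τ : ℤ))) from by ring]
        congr 1
        rw [← zpow_add₀ (w_ne_zero L), ← zpow_add₀ (w_ne_zero L)]
        congr 1
        push_cast
        ring
    _ = (L:ℂ)⁻¹ * ∑ t ∈ Finset.range L, ∑ s ∈ Finset.range L,
          c t * (starRingEnd ℂ) (d s) *
          ∑ f ∈ Finset.range L, w L ^ (((s:ℤ) - t - τ) * f) := by
        rw [← Finset.mul_sum, Finset.sum_comm]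
        congr 1
        apply Finset.sum_congr rfl
        intro t _
        rw [Finset.sum_comm]
        apply Finset.sum_congr rfl
        intro s _
        rw [Finset.mul_sum]
    _ = (L:ℂ)⁻¹ * ∑ t ∈ Finset.range L, ∑ s ∈ Finset.range L,
          (if s = (t + τ) % L then c t * (starRingEnd ℂ) (d s) * L else 0) := by
        congr 1
        apply Finset.sum_congr rfl
        intro t _
        apply Finset.sum_congr rfl
        intro s hs
        rw [sum_w L hL]
        have hcond : ((L:ℤ) ∣ ((s:ℤ) - t - τ)) ↔ s = (t + τ) % L := by
          rw [show ((s:ℤ) - t - τ) = (s:ℤ) - ((t + τ : ℕ) : ℤ) by push_cast; ring]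
          exact dvd_iff_eq_mod L hL s (t+τ) (Finset.mem_range.mp hs)
        by_cases h : s = (t + τ) % L
        · rw [if_pos (hcond.mpr h), if_pos h]
        · rw [if_neg (fun hh => h (hcond.mp hh)), if_neg h]
          ring
    _ = pcc L c d τ := by
        unfold pcc
        rw [Finset.mul_sum]
        apply Finset.sum_congr rfl
        intro t _
        rw [Finset.sum_ite_eq' (Finset.range L) ((t + τ) % L)
          (fun s => c t * (starRingEnd ℂ) (d s) * L)]
        rw [if_pos (Finset.mem_range.mpr (Nat.mod_lt _ hL))]
        field_simp


lemma sum_pcc_sq (L : ℕ) (hL : 0 < L) (c d : ℕ → ℂ) :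
    ∑ τ ∈ Finset.range L, ‖pcc L c d τ‖^2 =
      L * ∑ f ∈ Finset.range L, ‖udft L c f‖^2 * ‖udft L d f‖^2 := by
  set g : ℕ → ℂ := fun f => udft L c f * (starRingEnd ℂ) (udft L d f) with hg
  apply Complex.ofReal_injective
  push_cast
  have key : ∀ τ, pcc L c d τ * (starRingEnd ℂ) (pcc L c d τ) =
      ∑ f ∈ Finset.range L, ∑ f' ∈ Finset.range L,
        g f * (starRingEnd ℂ) (g f') * w L ^ (((f':ℤ) - f) * τ) := by
    intro τ
    rw [pcc_eq_sum L hL c d τ]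
    rw [map_sum, Finset.sum_mul_sum]
    apply Finset.sum_congr rfl
    intro f _
    apply Finset.sum_congr rfl
    intro f' _
    rw [map_mul, conj_w_zpow, neg_neg]
    rw [show g f * w L ^ (-(f * τ : ℤ)) * ((starRingEnd ℂ) (g f') * w L ^ ((f' * τ : ℤ)))
      = g f * (starRingEnd ℂ) (g f') * (w L ^ (-(f * τ : ℤ)) * w L ^ ((f' * τ : ℤ))) from by ring]
    congr 1
    rw [← zpow_add₀ (w_ne_zero L)]
    congr 1
    push_cast
    ring
  calc (∑ τ ∈ Finset.range L, (‖pcc L c d τ‖:ℂ)^2)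
      = ∑ τ ∈ Finset.range L, pcc L c d τ * (starRingEnd ℂ) (pcc L c d τ) := by
        apply Finset.sum_congr rfl
        intro τ _
        rw [Complex.mul_conj']
    _ = ∑ f ∈ Finset.range L, ∑ f' ∈ Finset.range L,
          g f * (starRingEnd ℂ) (g f') *
          ∑ τ ∈ Finset.range L, w L ^ (((f':ℤ) - f) * τ) := by
        rw [Finset.sum_congr rfl (fun τ _ => key τ), Finset.sum_comm]
        apply Finset.sum_congr rfl
        intro f _
        rw [Finset.sum_comm]
        apply Finset.sum_congr rfl
        intro f' _
        rw [Finset.mul_sum]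
    _ = ∑ f ∈ Finset.range L, ∑ f' ∈ Finset.range L,
          (if f' = f then g f * (starRingEnd ℂ) (g f') * L else 0) := by
        apply Finset.sum_congr rfl
        intro f hf
        apply Finset.sum_congr rfl
        intro f' hf'
        rw [sum_w L hL]
        have hcond : ((L:ℤ) ∣ ((f':ℤ) - f)) ↔ f' = f := by
          rw [dvd_iff_eq_mod L hL f' f (Finset.mem_range.mp hf'),
            Nat.mod_eq_of_lt (Finset.mem_range.mp hf)]
        by_cases h : f' = f
        · rw [if_pos (hcond.mpr h), if_pos h]
        · rw [if_neg (fun hh => h (hcond.mp hh)), if_neg h]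
          ring
    _ = ∑ f ∈ Finset.range L, g f * (starRingEnd ℂ) (g f) * L := by
        apply Finset.sum_congr rfl
        intro f hf
        rw [Finset.sum_ite_eq' (Finset.range L) f
          (fun f' => g f * (starRingEnd ℂ) (g f') * L), if_pos hf]
    _ = (L:ℂ) * ∑ f ∈ Finset.range L, (‖udft L c f‖:ℂ)^2 * (‖udft L d f‖:ℂ)^2 := by
        rw [Finset.mul_sum]
        apply Finset.sum_congr rfl
        intro f _
        rw [Complex.mul_conj']
        rw [hg]
        simp only [norm_mul, RCLike.norm_conj]
        push_cast
        ring

/-- for SCSs `C`, `D` with uniform power on admissible carriers, the maximum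
cross-correlation magnitude is at least `L/√(L−n)`, i.e. some `|θ_{C,D}(τ)|` with
`0 ≤ τ < L` attains at least this value. -/
theorem stmt2 (L n : ℕ) (hn : 0 < n) (hnL : n < L)
    (Ω : Finset ℕ) (hΩsub : Ω ⊆ Finset.range L) (hΩcard : Ω.card = n)
    (c d : ℕ → ℂ)
    (hc1 : ∀ f ∈ Finset.range L, f ∉ Ω → ‖udft L c f‖ ^ 2 = (L : ℝ) / ((L : ℝ) - (n : ℝ)))
    (hd1 : ∀ f ∈ Finset.range L, f ∉ Ω → ‖udft L d f‖ ^ 2 = (L : ℝ) / ((L : ℝ) - (n : ℝ)))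
    (hc0 : ∀ f ∈ Ω, udft L c f = 0)
    (hd0 : ∀ f ∈ Ω, udft L d f = 0) :
    ∃ τ : ℕ, τ < L ∧
      (L : ℝ) / Real.sqrt ((L : ℝ) - (n : ℝ)) ≤ ‖pcc L c d τ‖ := by
  have hL : 0 < L := lt_trans hn hnL
  have hden : (0:ℝ) < (L:ℝ) - (n:ℝ) := by
    have : (n:ℝ) < (L:ℝ) := by exact_mod_cast hnL
    linarith
  set A : ℝ := (L:ℝ) ^ 2 / ((L:ℝ) - (n:ℝ)) with hA
  -- value of the spectral sum
  have hS : ∑ f ∈ Finset.range L, ‖udft L c f‖^2 * ‖udft L d f‖^2 = A := by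
    rw [← Finset.sum_sdiff hΩsub]
    have h0 : ∑ f ∈ Ω, ‖udft L c f‖^2 * ‖udft L d f‖^2 = 0 :=
      Finset.sum_eq_zero fun f hf => by rw [hc0 f hf]; simp
    rw [h0, add_zero]
    have hterm : ∀ f ∈ Finset.range L \ Ω,
        ‖udft L c f‖^2 * ‖udft L d f‖^2
          = ((L:ℝ)/((L:ℝ)-(n:ℝ))) * ((L:ℝ)/((L:ℝ)-(n:ℝ))) := by
      intro f hf
      obtain ⟨hf1, hf2⟩ := Finset.mem_sdiff.mp hf
      rw [hc1 f hf1 hf2, hd1 f hf1 hf2]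
    rw [Finset.sum_congr rfl hterm, Finset.sum_const,
      Finset.card_sdiff_of_subset hΩsub, Finset.card_range, hΩcard, nsmul_eq_mul,
      Nat.cast_sub hnL.le, hA]
    field_simp
  have hsum : ∑ τ ∈ Finset.range L, ‖pcc L c d τ‖^2 = (L:ℝ) * A := by
    rw [sum_pcc_sq L hL c d, hS]
  -- existence by averaging
  have hex : ∃ τ ∈ Finset.range L, A ≤ ‖pcc L c d τ‖^2 := by
    by_contra hcon
    push_neg at hcon
    have hlt : ∑ τ ∈ Finset.range L, ‖pcc L c d τ‖^2 <
        ∑ _τ ∈ Finset.range L, A :=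
      Finset.sum_lt_sum_of_nonempty ⟨0, Finset.mem_range.mpr hL⟩ hcon
    rw [hsum, Finset.sum_const, Finset.card_range, nsmul_eq_mul] at hlt
    exact lt_irrefl _ hlt
  obtain ⟨τ, hτ, hbound⟩ := hex
  refine ⟨τ, Finset.mem_range.mp hτ, ?_⟩
  have h1 : Real.sqrt A ≤ ‖pcc L c d τ‖ := by
    have := Real.sqrt_le_sqrt hbound
    rwa [Real.sqrt_sq (norm_nonneg _)] at this
  have h2 : Real.sqrt A = (L:ℝ) / Real.sqrt ((L:ℝ) - (n:ℝ)) := by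
    rw [hA, Real.sqrt_div (by positivity), Real.sqrt_sq (by positivity)]
  rwa [h2] at h1
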